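/- Let p, v ∈ ℝ^d with ‖p‖ = l_p > 0, ‖v‖ = l_v, and l_v < l_p. Let x = ⟨p,v⟩/(l_p·l_v) ∈ [−1,1] and a = l_v/l_p. Then the cosine similarity s between p+v and p equals (1+ax)/√(1+a²+2ax) and satisfies s ≥ √(1 − l_v²/l_p²). -/
import Mathlib

open RealInnerProductSpace

theorem stmt7 (d : ℕ) (p v : EuclideanSpace ℝ (Fin d))
    (hp : 0 < ‖p‖) (hvp : ‖v‖ < ‖p‖) :
    ⟪p + v, p⟫ / (‖p + v‖ * ‖p‖) =
        (1 + (‖v‖ / ‖p‖) * (⟪p, v⟫ / (‖p‖ * ‖v‖))) /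
          Real.sqrt (1 + (‖v‖ / ‖p‖) ^ 2 +
            2 * (‖v‖ / ‖p‖) * (⟪p, v⟫ / (‖p‖ * ‖v‖))) ∧
      ⟪p + v, p⟫ / (‖p + v‖ * ‖p‖) ≥ Real.sqrt (1 - ‖v‖ ^ 2 / ‖p‖ ^ 2) := by
  rcases eq_or_lt_of_le (norm_nonneg v) with hV0 | hV0
  · have hv : v = 0 := norm_eq_zero.mp hV0.symm
    subst hv
    rw [add_zero]
    rw [real_inner_self_eq_norm_sq, inner_zero_right, norm_zero]
    constructor
    · rw [show ‖p‖ ^ 2 / (‖p‖ * ‖p‖) = 1 by rw [sq]; exact div_self (by positivity)]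
      norm_num
    · rw [show ‖p‖ ^ 2 / (‖p‖ * ‖p‖) = 1 by rw [sq]; exact div_self (by positivity)]
      norm_num
  · set P := ‖p‖ with hP
    set V := ‖v‖ with hV
    set t := ⟪p, v⟫ with ht
    have hP0 : P ≠ 0 := ne_of_gt hp
    have hVne : V ≠ 0 := ne_of_gt hV0
    have hip : ⟪p + v, p⟫ = P ^ 2 + t := by
      rw [inner_add_left, real_inner_self_eq_norm_sq, real_inner_comm]
    have hnorm : ‖p + v‖ ^ 2 = P ^ 2 + V ^ 2 + 2 * t := by
      rw [@norm_add_sq_real]; ring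
    have hcs : |t| ≤ P * V := abs_real_inner_le_norm p v
    have hpv0 : 0 < ‖p + v‖ := by
      have h1 : P ≤ ‖p + v‖ + V := by simpa using norm_sub_le (p + v) v
      linarith
    have hkey : Real.sqrt (1 + (V / P) ^ 2 + 2 * (V / P) * (t / (P * V)))
        = ‖p + v‖ / P := by
      rw [show 1 + (V / P) ^ 2 + 2 * (V / P) * (t / (P * V)) = (‖p + v‖ / P) ^ 2 by
        rw [div_pow ‖p + v‖ P, hnorm]; field_simp]
      exact Real.sqrt_sq (by positivity)
    have hnum : 0 < P ^ 2 + t := by nlinarith [abs_le.mp hcs]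
    constructor
    · rw [hip, hkey]
      field_simp
    · rw [hip]
      have hs2 : ((P ^ 2 + t) / (‖p + v‖ * P)) ^ 2
          = (P ^ 2 + t) ^ 2 / ((P ^ 2 + V ^ 2 + 2 * t) * P ^ 2) := by
        rw [div_pow, mul_pow, hnorm]
      have h1 : 1 - V ^ 2 / P ^ 2 ≤ ((P ^ 2 + t) / (‖p + v‖ * P)) ^ 2 := by
        rw [hs2, show (1:ℝ) - V ^ 2 / P ^ 2 = (P ^ 2 - V ^ 2) / P ^ 2 by field_simp,
          div_le_div_iff₀ (by positivity) (by rw [← hnorm]; positivity)]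
        nlinarith [sq_nonneg (t + V ^ 2)]
      calc Real.sqrt (1 - V ^ 2 / P ^ 2)
            ≤ Real.sqrt (((P ^ 2 + t) / (‖p + v‖ * P)) ^ 2) := Real.sqrt_le_sqrt h1
        _ = (P ^ 2 + t) / (‖p + v‖ * P) := Real.sqrt_sq (by positivity)
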